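/- Let S be a commutative p-scheme of order p^4 such that n_{O_θ(S)} = p^2, n_{O^θ(S)} = p^3, and n_t = p^2 for every t ∈ O^θ(S) ∖ O_θ(S). Then n_s ≥ p^2 for every s ∈ S ∖ O^θ(S). -/

import Mathlib

open Set

/-- The diagonal relation `1_X` on a set `X`. -/
def schemeDiag (X : Type*) : Set (X × X) := {p | p.1 = p.2}

/-- The transpose `s*` of a relation `s`. -/
def schemeTransp {X : Type*} (s : Set (X × X)) : Set (X × X) := {p | (p.2, p.1) ∈ s}

/-- An association scheme on a finite set `X`: a partition of `X × X` containing the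
diagonal, closed under transposition, with well-defined intersection numbers `a s t u`. -/
structure AssocScheme (X : Type*) [Fintype X] where
  rels : Set (Set (X × X))
  partition : ∀ p : X × X, ∃! s, s ∈ rels ∧ p ∈ s
  diag_mem : schemeDiag X ∈ rels
  transpose_mem : ∀ s ∈ rels, schemeTransp s ∈ rels
  a : Set (X × X) → Set (X × X) → Set (X × X) → ℕ
  a_spec : ∀ s ∈ rels, ∀ t ∈ rels, ∀ u ∈ rels, ∀ x y : X, (x, y) ∈ u →
    a s t u = Nat.card {z : X | (x, z) ∈ s ∧ (z, y) ∈ t}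

namespace AssocScheme

variable {X : Type*} [Fintype X] (S : AssocScheme X)

/-- The valency `n_s = a_{s s* 1_X}` of a relation. -/
def val (s : Set (X × X)) : ℕ := S.a s (schemeTransp s) (schemeDiag X)

/-- The complex product `uv` of two relations. -/
def cprod (u v : Set (X × X)) : Set (Set (X × X)) := {s ∈ S.rels | S.a u v s ≠ 0}

/-- The complex product `PQ` of two sets of relations. -/
def sprod (P Q : Set (Set (X × X))) : Set (Set (X × X)) :=
  {s ∈ S.rels | ∃ p ∈ P, ∃ q ∈ Q, S.a p q s ≠ 0}

/-- A (nonempty) closed subset of the scheme. -/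
def IsClosedSubset (T : Set (Set (X × X))) : Prop :=
  T.Nonempty ∧ T ⊆ S.rels ∧ ∀ u ∈ T, ∀ v ∈ T, S.cprod u v ⊆ T

/-- The thin radical `O_θ(S)`: the set of relations of valency 1. -/
def thinRadical : Set (Set (X × X)) := {s ∈ S.rels | S.val s = 1}

/-- The smallest closed subset containing all `t* t` for `t ∈ T`. -/
def resOf (T : Set (Set (X × X))) : Set (Set (X × X)) :=
  ⋂₀ {U | S.IsClosedSubset U ∧ ∀ t ∈ T, S.cprod (schemeTransp t) t ⊆ U}

/-- The thin residue `O^θ(S) = ⟨⋃_{s ∈ S} s* s⟩`. -/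
def thinResidue : Set (Set (X × X)) := S.resOf S.rels

/-- The order `n_U = ∑_{u ∈ U} n_u` of a set of relations. -/
noncomputable def nOrd (U : Set (Set (X × X))) : ℕ := ∑ᶠ u ∈ U, S.val u

/-- Commutativity of the scheme. -/
def IsCommutative : Prop :=
  ∀ u ∈ S.rels, ∀ v ∈ S.rels, ∀ w ∈ S.rels, S.a u v w = S.a v u w

/-- `S` is a `p`-scheme: `|X|` and all valencies are powers of the prime `p`. -/
def IsPScheme (p : ℕ) : Prop :=
  p.Prime ∧ (∃ n, Fintype.card X = p ^ n) ∧ ∀ s ∈ S.rels, ∃ i, S.val s = p ^ i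

/-- `S` is schurian: its relations are the orbitals of a transitive permutation group. -/
def IsSchurian : Prop :=
  ∃ G : Subgroup (Equiv.Perm X), (∀ x y : X, ∃ g ∈ G, g x = y) ∧
    S.rels = {o | ∃ q : X × X, o = {r : X × X | ∃ g ∈ G, (g q.1, g q.2) = r}}

/-- The right stabilizer `R(s) = {t | st = s}`. -/
def Rstab (s : Set (X × X)) : Set (Set (X × X)) := {t ∈ S.rels | S.cprod s t = {s}}

/-- The left stabilizer `L(s) = {t | ts = s}`. -/
def Lstab (s : Set (X × X)) : Set (Set (X × X)) := {t ∈ S.rels | S.cprod t s = {s}}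

/-- A faithful map: `r(x,y) = r(φ x, φ y)` for all `x, y`. -/
def IsFaithful (φ : X → X) : Prop :=
  ∀ x y : X, ∀ s ∈ S.rels, (x, y) ∈ s → (φ x, φ y) ∈ s

/-- An automorphism of the scheme. -/
def IsAutomorphism (φ : X → X) : Prop := Function.Bijective φ ∧ S.IsFaithful φ

/-- The quotient scheme `S // T` is isomorphic to the cyclic group `C_m`:
there is a surjection `f : X → ZMod m` whose difference map classifies the
double-coset relations `T s T`. -/
def QuotIsoCyclic (T : Set (Set (X × X))) (m : ℕ) : Prop :=
  ∃ f : X → ZMod m, Function.Surjective f ∧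
    ∀ x y x' y' : X, (f y - f x = f y' - f x') ↔
      ∃ s ∈ S.rels, (x, y) ∈ s ∧ ∃ s' ∈ S.sprod (S.sprod T {s}) T, (x', y') ∈ s'

/-- A thin closed subset `T` is isomorphic, as a group under the relational
product, to the additive group `G`. -/
def ThinGroupIso (T : Set (Set (X × X))) (G : Type*) [AddGroup G] : Prop :=
  (∀ t ∈ T, S.val t = 1) ∧ ∃ f : Set (X × X) → G, Set.BijOn f T Set.univ ∧
    ∀ t1 ∈ T, ∀ t2 ∈ T, ∀ u, S.cprod t1 t2 = {u} → f u = f t1 + f t2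

end AssocScheme

/-- The set of relations of the wreath product `F ≀ H`. -/
def wreathRels {W Y : Type*} [Fintype W] [Fintype Y]
    (F : AssocScheme W) (H : AssocScheme Y) : Set (Set ((W × Y) × (W × Y))) :=
  {r | ∃ f ∈ F.rels, r = {p : (W × Y) × (W × Y) | p.1.2 = p.2.2 ∧ (p.1.1, p.2.1) ∈ f}} ∪
  {r | ∃ h ∈ H.rels, h ≠ schemeDiag Y ∧
    r = {p : (W × Y) × (W × Y) | (p.1.2, p.2.2) ∈ h}}

/-!
Write `E = O_θ(S)` and `T = O^θ(S)`. Counting valencies in `n_T = p ^ 3` forces `E ⊆ T` and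
`|T \ E| = p - 1`. The group `E` acts on `T \ E` by `t ↦ t e` with orbits of `p`-power size,
so it fixes every `t`; the thin constituents of `t* t` then already account for `n_t ^ 2 = p ^ 4`,
whence `t* t ⊆ E`. If some `s ∉ T` had `n_s ≤ p`, then also `s* s ⊆ E`, since a non-thin
constituent of `s* s` lies in `T` and has valency `p ^ 2 ≥ n_s ^ 2`. By commutativity the
relations `w` with `w* w ⊆ E` form a closed subset; it contains `T` and `s`, so its order exceeds
`p ^ 3` and divides `p ^ 4`: it is all of `S`. Then `E` contains every `w* w`, so `T ⊆ E`,
contradicting `n_T = p ^ 3 > p ^ 2 = n_E`.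
-/

open Finset SetRel

namespace AssocScheme

open scoped Classical

lemma schemeTransp_eq_inv {X : Type*} (s : SetRel X X) : schemeTransp s = s.inv := rfl

lemma schemeDiag_eq_id {X : Type*} : schemeDiag X = SetRel.id := rfl

variable {X : Type*} [Fintype X] {S : AssocScheme X}

lemma inv_mem {s : SetRel X X} (hs : s ∈ S.rels) : s.inv ∈ S.rels := S.transpose_mem s hs

lemma id_mem : SetRel.id ∈ S.rels := S.diag_mem

lemma exists_mem_rels (q : X × X) : ∃ s ∈ S.rels, q ∈ s :=
  (S.partition q).exists

lemma eq_of_mem_of_mem {s t : SetRel X X} {q : X × X} (hs : s ∈ S.rels) (ht : t ∈ S.rels)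
    (hqs : q ∈ s) (hqt : q ∈ t) : s = t :=
  (S.partition q).unique ⟨hs, hqs⟩ ⟨ht, hqt⟩

lemma a_eq_card {u v w : SetRel X X} (hu : u ∈ S.rels) (hv : v ∈ S.rels) (hw : w ∈ S.rels)
    {x y : X} (hxy : (x, y) ∈ w) : S.a u v w = #{z | (x, z) ∈ u ∧ (z, y) ∈ v} := by
  rw [S.a_spec u hu v hv w hw x y hxy, ← Set.ncard_coe_finset, Nat.card_coe_set_eq]
  simp

lemma val_eq_card {s : SetRel X X} (hs : s ∈ S.rels) (x : X) : S.val s = #{y | (x, y) ∈ s} := by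
  rw [val, schemeTransp_eq_inv, schemeDiag_eq_id, S.a_eq_card hs (inv_mem hs) id_mem (x := x) rfl]
  simp

lemma val_inv [Nonempty X] {s : SetRel X X} (hs : s ∈ S.rels) : S.val s.inv = S.val s := by
  have := card_mul_eq_card_mul (fun x y => (x, y) ∈ s) (s := univ) (t := univ)
    (m := S.val s) (n := S.val s.inv)
    (fun x _ => by rw [S.val_eq_card hs x]; rfl)
    (fun y _ => by rw [S.val_eq_card (inv_mem hs) y]; rfl)
  exact (Nat.eq_of_mul_eq_mul_left (card_pos.2 univ_nonempty) this).symm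

lemma subset_comp_of_a_ne_zero {u v w : SetRel X X} (hu : u ∈ S.rels) (hv : v ∈ S.rels)
    (hw : w ∈ S.rels) (h : S.a u v w ≠ 0) : w ⊆ u ○ v := by
  rintro ⟨x, y⟩ hxy
  rw [S.a_eq_card hu hv hw hxy] at h
  obtain ⟨z, hz⟩ := card_ne_zero.1 h
  exact ⟨z, (mem_filter.1 hz).2⟩

lemma a_ne_zero_of_mem {u v w : SetRel X X} (hu : u ∈ S.rels) (hv : v ∈ S.rels)
    (hw : w ∈ S.rels) {x y z : X} (hxy : (x, y) ∈ w) (hxz : (x, z) ∈ u) (hzy : (z, y) ∈ v) :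
    S.a u v w ≠ 0 := by
  rw [S.a_eq_card hu hv hw hxy]
  exact card_ne_zero.2 ⟨z, by simp [hxz, hzy]⟩

lemma comp_subset_sUnion_cprod {u v : SetRel X X} (hu : u ∈ S.rels) (hv : v ∈ S.rels) :
    u ○ v ⊆ ⋃₀ S.cprod u v := by
  rintro ⟨x, y⟩ ⟨z, hxz, hzy⟩
  obtain ⟨w, hw, hxy⟩ := S.exists_mem_rels (x, y)
  exact ⟨w, ⟨hw, S.a_ne_zero_of_mem hu hv hw hxy hxz hzy⟩, hxy⟩

lemma cprod_comm (hcomm : S.IsCommutative) {u v : SetRel X X} (hu : u ∈ S.rels)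
    (hv : v ∈ S.rels) : S.cprod u v = S.cprod v u := by
  ext w
  exact and_congr_right fun hw => by rw [hcomm u hu v hv w hw]

lemma sum_a_mul_val_le [Nonempty X] {u v : SetRel X X} (hu : u ∈ S.rels) (hv : v ∈ S.rels)
    (F : Finset (SetRel X X)) (hF : ∀ w ∈ F, w ∈ S.rels) :
    ∑ w ∈ F, S.a u v w * S.val w ≤ S.val u * S.val v := by
  obtain ⟨x⟩ := ‹Nonempty X›
  -- count the paths `x → z → y` through `u` and then `v`, grouped by their endpoint `y`
  set paths : X → ℕ := fun y => #{z | (x, z) ∈ u ∧ (z, y) ∈ v}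
  have hw : ∀ w ∈ F, S.a u v w * S.val w = ∑ y ∈ {y | (x, y) ∈ w}, paths y :=
    fun w hwF => by
      rw [S.val_eq_card (hF w hwF) x, mul_comm, ← smul_eq_mul, ← sum_const]
      exact sum_congr rfl fun y hy => S.a_eq_card hu hv (hF w hwF) (mem_filter.1 hy).2
  have hdisj : (F : Set (SetRel X X)).PairwiseDisjoint fun w => ({y | (x, y) ∈ w} : Finset X) :=
    fun w₁ hw₁ w₂ hw₂ hne => disjoint_left.2 fun y hy₁ hy₂ => hne <| S.eq_of_mem_of_mem
      (hF w₁ hw₁) (hF w₂ hw₂) (mem_filter.1 hy₁).2 (mem_filter.1 hy₂).2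
  calc ∑ w ∈ F, S.a u v w * S.val w
      = ∑ y ∈ F.biUnion fun w => ({y | (x, y) ∈ w} : Finset X), paths y := by
        rw [sum_biUnion hdisj]; exact sum_congr rfl hw
    _ ≤ ∑ y, paths y := sum_le_univ_sum_of_nonneg fun _ => Nat.zero_le _
    _ = ∑ z ∈ {z | (x, z) ∈ u}, #{y | (z, y) ∈ v} := by
        have := sum_card_bipartiteAbove_eq_sum_card_bipartiteBelow
          (s := ({z | (x, z) ∈ u} : Finset X)) (t := univ) (r := fun z y => (z, y) ∈ v)
        simp only [bipartiteAbove, bipartiteBelow, filter_filter] at this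
        exact this.symm
    _ = S.val u * S.val v := by
        rw [sum_congr rfl fun z _ => (S.val_eq_card hv z).symm, sum_const, smul_eq_mul,
          S.val_eq_card hu x]

lemma val_comp_le [Nonempty X] {u v : SetRel X X} (hu : u ∈ S.rels) (hv : v ∈ S.rels)
    (huv : u ○ v ∈ S.rels) : S.val (u ○ v) ≤ S.val u * S.val v := by
  obtain ⟨x⟩ := ‹Nonempty X›
  rw [S.val_eq_card huv x, S.val_eq_card hu x]
  calc #{y | (x, y) ∈ u ○ v}
      ≤ #(({z | (x, z) ∈ u} : Finset X).biUnion fun z => {y | (z, y) ∈ v}) :=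
        card_le_card fun y hy => by simpa using hy
    _ ≤ ∑ z ∈ {z | (x, z) ∈ u}, #{y | (z, y) ∈ v} := card_biUnion_le
    _ = #{z | (x, z) ∈ u} * S.val v := by
        rw [sum_congr rfl fun z _ => (S.val_eq_card hv z).symm, sum_const, smul_eq_mul]

lemma val_id [Nonempty X] : S.val (SetRel.id : SetRel X X) = 1 := by
  obtain ⟨x⟩ := ‹Nonempty X›
  rw [S.val_eq_card id_mem x, card_eq_one]
  exact ⟨x, by ext y; simp [eq_comm]⟩

-- Nothing in `AssocScheme` keeps `∅` out of `rels`, and the intersection numbers `S.a _ _ ∅`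
-- are unconstrained; the hypothesis `hS` below rules this out.
lemma nonempty_of_forall_nonempty (hS : ∀ s ∈ S.rels, s.Nonempty) : Nonempty X :=
  ⟨(hS _ id_mem).some.1⟩

lemma val_pos_iff [Nonempty X] {s : SetRel X X} (hs : s ∈ S.rels) :
    0 < S.val s ↔ s.Nonempty := by
  refine ⟨fun h => ?_, fun ⟨⟨x, y⟩, hxy⟩ => ?_⟩
  · obtain ⟨x⟩ := ‹Nonempty X›
    obtain ⟨y, hy⟩ := card_pos.1 (S.val_eq_card hs x ▸ h)
    exact ⟨(x, y), (mem_filter.1 hy).2⟩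
  · exact S.val_eq_card hs x ▸ card_pos.2 ⟨y, by simpa using hxy⟩

lemma IsPScheme.val_pos {p : ℕ} (hp : S.IsPScheme p) {s : SetRel X X} (hs : s ∈ S.rels) :
    0 < S.val s := by
  obtain ⟨i, hi⟩ := hp.2.2 s hs
  exact hi ▸ pow_pos hp.1.pos i

lemma exists_mem_of_forall_nonempty (hS : ∀ s ∈ S.rels, s.Nonempty) {s : SetRel X X}
    (hs : s ∈ S.rels) (x : X) : ∃ y, (x, y) ∈ s := by
  have := nonempty_of_forall_nonempty hS
  obtain ⟨y, hy⟩ := card_pos.1 (S.val_eq_card hs x ▸ (val_pos_iff hs).2 (hS s hs))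
  exact ⟨y, (mem_filter.1 hy).2⟩

lemma cprod_subset_iff (hS : ∀ s ∈ S.rels, s.Nonempty) {u v : SetRel X X} (hu : u ∈ S.rels)
    (hv : v ∈ S.rels) {U : Set (SetRel X X)} (hU : U ⊆ S.rels) :
    S.cprod u v ⊆ U ↔ u ○ v ⊆ ⋃₀ U := by
  refine ⟨fun h => (S.comp_subset_sUnion_cprod hu hv).trans (Set.sUnion_mono h),
    fun h w hw => ?_⟩
  obtain ⟨q, hq⟩ := hS w hw.1
  obtain ⟨w', hw', hqw'⟩ := h (S.subset_comp_of_a_ne_zero hu hv hw.1 hw.2 hq)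
  rwa [S.eq_of_mem_of_mem hw.1 (hU hw') hq hqw']

lemma id_mem_cprod_inv_self (hS : ∀ s ∈ S.rels, s.Nonempty) {s : SetRel X X}
    (hs : s ∈ S.rels) : SetRel.id ∈ S.cprod s.inv s := by
  obtain ⟨x⟩ := nonempty_of_forall_nonempty hS
  obtain ⟨z, hz⟩ := exists_mem_of_forall_nonempty hS (inv_mem hs) x
  exact ⟨id_mem, S.a_ne_zero_of_mem (inv_mem hs) hs id_mem (x := x) (y := x) rfl hz hz⟩

lemma val_add_one_le_sq (hS : ∀ s ∈ S.rels, s.Nonempty) {s r : SetRel X X} (hs : s ∈ S.rels)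
    (hr : r ∈ S.cprod s.inv s) (hr1 : r ≠ SetRel.id) : S.val r + 1 ≤ S.val s ^ 2 := by
  have := nonempty_of_forall_nonempty hS
  have h := S.sum_a_mul_val_le (inv_mem hs) hs {SetRel.id, r} (by simp [id_mem, hr.1])
  rw [sum_pair hr1.symm, val_inv hs, val_id, ← sq] at h
  have h1 := Nat.one_le_iff_ne_zero.2 (id_mem_cprod_inv_self hS hs).2
  have h2 := Nat.le_mul_of_pos_left (S.val r) (Nat.pos_of_ne_zero hr.2)
  omega

lemma existsUnique_of_mem_thinRadical {e : SetRel X X} (he : e ∈ S.thinRadical) (x : X) :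
    ∃! y, (x, y) ∈ e := by
  obtain ⟨y, hy⟩ := card_eq_one.1 ((S.val_eq_card he.1 x).symm.trans he.2)
  obtain ⟨hy, huniq⟩ := eq_singleton_iff_unique_mem.1 hy
  exact ⟨y, (mem_filter.1 hy).2, fun z hz => huniq z (by simpa using hz)⟩

lemma id_mem_thinRadical [Nonempty X] : SetRel.id ∈ S.thinRadical := ⟨id_mem, val_id⟩

lemma inv_mem_thinRadical [Nonempty X] {e : SetRel X X} (he : e ∈ S.thinRadical) :
    e.inv ∈ S.thinRadical :=
  ⟨inv_mem he.1, (val_inv he.1).trans he.2⟩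

lemma comp_inv_self_of_mem_thinRadical [Nonempty X] {e : SetRel X X}
    (he : e ∈ S.thinRadical) : e ○ e.inv = SetRel.id := by
  ext ⟨x, y⟩
  refine ⟨fun ⟨z, hxz, hzy⟩ => ?_, fun (hxy : x = y) => ?_⟩
  · exact (existsUnique_of_mem_thinRadical (inv_mem_thinRadical he) z).unique hxz hzy
  · obtain ⟨z, hz, -⟩ := existsUnique_of_mem_thinRadical he x
    exact ⟨z, hz, hxy ▸ hz⟩

lemma inv_comp_self_of_mem_thinRadical [Nonempty X] {e : SetRel X X}
    (he : e ∈ S.thinRadical) : e.inv ○ e = SetRel.id :=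
  comp_inv_self_of_mem_thinRadical (inv_mem_thinRadical he)

lemma eq_comp_of_mem_cprod_of_mem_thinRadical (hS : ∀ s ∈ S.rels, s.Nonempty)
    {u e w : SetRel X X} (hu : u ∈ S.rels) (he : e ∈ S.thinRadical) (hw : w ∈ S.cprod u e) :
    w = u ○ e := by
  have := nonempty_of_forall_nonempty hS
  have hwue := S.subset_comp_of_a_ne_zero hu he.1 hw.1 hw.2
  obtain ⟨⟨x, y⟩, hxy⟩ := hS w hw.1
  obtain ⟨z, hxz, hzy⟩ := hwue hxy
  have hu' : u ⊆ w ○ e.inv := S.subset_comp_of_a_ne_zero hw.1 (inv_mem he.1) hu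
    (S.a_ne_zero_of_mem hw.1 (inv_mem he.1) hu hxz hxy hzy)
  refine hwue.antisymm ?_
  calc u ○ e ⊆ w ○ e.inv ○ e := comp_subset_comp_left hu'
    _ = w := by rw [comp_assoc, inv_comp_self_of_mem_thinRadical he, comp_id]

lemma comp_mem_cprod_of_mem_thinRadical (hS : ∀ s ∈ S.rels, s.Nonempty)
    {u e : SetRel X X} (hu : u ∈ S.rels) (he : e ∈ S.thinRadical) :
    u ○ e ∈ S.cprod u e := by
  obtain ⟨⟨x, z⟩, hxz⟩ := hS u hu
  obtain ⟨y, hzy⟩ := exists_mem_of_forall_nonempty hS he.1 z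
  obtain ⟨w, hw, -⟩ := S.comp_subset_sUnion_cprod hu he.1 (prodMk_mem_comp hxz hzy)
  rwa [← eq_comp_of_mem_cprod_of_mem_thinRadical hS hu he hw]

lemma val_comp_of_mem_thinRadical (hS : ∀ s ∈ S.rels, s.Nonempty) {u e : SetRel X X}
    (hu : u ∈ S.rels) (he : e ∈ S.thinRadical) : S.val (u ○ e) = S.val u := by
  have := nonempty_of_forall_nonempty hS
  have hue := (comp_mem_cprod_of_mem_thinRadical hS hu he).1
  have hcancel : u ○ e ○ e.inv = u := by
    rw [comp_assoc, comp_inv_self_of_mem_thinRadical he, comp_id]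
  refine le_antisymm ((val_comp_le hu he.1 hue).trans_eq (by rw [he.2, mul_one])) ?_
  calc S.val u = S.val (u ○ e ○ e.inv) := by rw [hcancel]
    _ ≤ S.val (u ○ e) * S.val e.inv := val_comp_le hue (inv_mem he.1) (by rwa [hcancel])
    _ = S.val (u ○ e) := by rw [(inv_mem_thinRadical he).2, mul_one]

lemma comp_mem_thinRadical (hS : ∀ s ∈ S.rels, s.Nonempty) {e f : SetRel X X}
    (he : e ∈ S.thinRadical) (hf : f ∈ S.thinRadical) : e ○ f ∈ S.thinRadical :=
  ⟨(comp_mem_cprod_of_mem_thinRadical hS he.1 hf).1,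
    (val_comp_of_mem_thinRadical hS he.1 hf).trans he.2⟩

lemma cprod_subset_thinRadical (hS : ∀ s ∈ S.rels, s.Nonempty) {e f : SetRel X X}
    (he : e ∈ S.thinRadical) (hf : f ∈ S.thinRadical) : S.cprod e f ⊆ S.thinRadical :=
  fun w hw => by
    rw [eq_comp_of_mem_cprod_of_mem_thinRadical hS he.1 hf hw]
    exact comp_mem_thinRadical hS he hf

lemma isClosedSubset_thinRadical (hS : ∀ s ∈ S.rels, s.Nonempty) :
    S.IsClosedSubset S.thinRadical :=
  have := nonempty_of_forall_nonempty hS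
  ⟨⟨_, id_mem_thinRadical⟩, fun _ h => h.1,
    fun _ he _ hf => cprod_subset_thinRadical hS he hf⟩

lemma card_image_comp_dvd (hS : ∀ s ∈ S.rels, s.Nonempty) (t : SetRel X X) :
    #(S.thinRadical.toFinset.image (t ○ ·)) ∣ #S.thinRadical.toFinset := by
  have := nonempty_of_forall_nonempty hS
  -- `e ↦ e ○ e₀⁻¹` carries the fibre over `t ○ e₀` onto the fibre over `t`
  have hfib : ∀ e₀ : SetRel X X, e₀ ∈ S.thinRadical.toFinset →
      #{e ∈ S.thinRadical.toFinset | t ○ e = t ○ e₀} =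
        #{e ∈ S.thinRadical.toFinset | t ○ e = t} := by
    intro e₀ he₀
    rw [Set.mem_toFinset] at he₀
    refine card_nbij' (· ○ e₀.inv) (· ○ e₀) (fun e he => ?_) (fun e he => ?_)
      (fun e _ => ?_) (fun e _ => ?_)
    · simp only [coe_filter, Set.mem_toFinset, Set.mem_ofPred_eq] at he ⊢
      refine ⟨comp_mem_thinRadical hS he.1 (inv_mem_thinRadical he₀), ?_⟩
      rw [← comp_assoc, he.2, comp_assoc, comp_inv_self_of_mem_thinRadical he₀, comp_id]
    · simp only [coe_filter, Set.mem_toFinset, Set.mem_ofPred_eq] at he ⊢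
      exact ⟨comp_mem_thinRadical hS he.1 he₀, by rw [← comp_assoc, he.2]⟩
    · simp only [comp_assoc, inv_comp_self_of_mem_thinRadical he₀, comp_id]
    · simp only [comp_assoc, comp_inv_self_of_mem_thinRadical he₀, comp_id]
  have hsum := card_eq_sum_card_image (t ○ ·) S.thinRadical.toFinset
  rw [sum_congr rfl (g := fun _ => #{e ∈ S.thinRadical.toFinset | t ○ e = t}) fun b hb => by
    obtain ⟨e₀, he₀, rfl⟩ := mem_image.1 hb
    exact hfib e₀ he₀, sum_const, smul_eq_mul] at hsum
  exact hsum ▸ dvd_mul_right _ _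

lemma sUnion_thinRadical_comp_self_subset (hS : ∀ s ∈ S.rels, s.Nonempty) :
    ⋃₀ S.thinRadical ○ ⋃₀ S.thinRadical ⊆ ⋃₀ S.thinRadical := by
  rintro ⟨x, y⟩ ⟨z, ⟨e, he, hxz⟩, ⟨f, hf, hzy⟩⟩
  exact (cprod_subset_iff hS he.1 hf.1 fun _ h => h.1).1 (cprod_subset_thinRadical hS he hf)
    ⟨z, hxz, hzy⟩

lemma sUnion_thinRadical_comp_subset (hS : ∀ s ∈ S.rels, s.Nonempty)
    (hcomm : S.IsCommutative) {v : SetRel X X} (hv : v ∈ S.rels) :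
    ⋃₀ S.thinRadical ○ v ⊆ v ○ ⋃₀ S.thinRadical := by
  rintro ⟨x, y⟩ ⟨z, ⟨e, he, hxz⟩, hzy⟩
  obtain ⟨w, hw, hxy⟩ := S.comp_subset_sUnion_cprod he.1 hv (prodMk_mem_comp hxz hzy)
  rw [cprod_comm hcomm he.1 hv] at hw
  obtain ⟨z', hxz', hz'y⟩ := eq_comp_of_mem_cprod_of_mem_thinRadical hS hv he hw ▸ hxy
  exact ⟨z', hxz', e, he, hz'y⟩

lemma cprod_inv_self_subset_thinRadical_of_mem_cprod (hS : ∀ s ∈ S.rels, s.Nonempty)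
    (hcomm : S.IsCommutative) {u v w : SetRel X X} (hu : u ∈ S.rels) (hv : v ∈ S.rels)
    (huE : S.cprod u.inv u ⊆ S.thinRadical) (hvE : S.cprod v.inv v ⊆ S.thinRadical)
    (hw : w ∈ S.cprod u v) : S.cprod w.inv w ⊆ S.thinRadical := by
  have hE : S.thinRadical ⊆ S.rels := fun _ h => h.1
  rw [cprod_subset_iff hS (inv_mem hu) hu hE] at huE
  rw [cprod_subset_iff hS (inv_mem hv) hv hE] at hvE
  rw [cprod_subset_iff hS (inv_mem hw.1) hw.1 hE]
  have hwuv := S.subset_comp_of_a_ne_zero hu hv hw.1 hw.2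
  calc w.inv ○ w ⊆ (u ○ v).inv ○ (u ○ v) := by gcongr
    _ = v.inv ○ (u.inv ○ u) ○ v := by simp only [inv_comp, comp_assoc]
    _ ⊆ v.inv ○ ⋃₀ S.thinRadical ○ v := by gcongr
    _ ⊆ v.inv ○ (v ○ ⋃₀ S.thinRadical) := by
        rw [comp_assoc]; exact comp_subset_comp_right (sUnion_thinRadical_comp_subset hS hcomm hv)
    _ = v.inv ○ v ○ ⋃₀ S.thinRadical := (comp_assoc _ _ _).symm
    _ ⊆ ⋃₀ S.thinRadical ○ ⋃₀ S.thinRadical := by gcongr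
    _ ⊆ ⋃₀ S.thinRadical := sUnion_thinRadical_comp_self_subset hS

lemma thinResidue_subset_of_isClosedSubset {U : Set (SetRel X X)} (hU : S.IsClosedSubset U)
    (h : ∀ s : SetRel X X, s ∈ S.rels → S.cprod s.inv s ⊆ U) : S.thinResidue ⊆ U :=
  Set.sInter_subset_of_mem ⟨hU, h⟩

lemma thinResidue_subset_rels : S.thinResidue ⊆ S.rels :=
  thinResidue_subset_of_isClosedSubset ⟨⟨_, id_mem⟩, subset_rfl, fun _ _ _ _ _ hw => hw.1⟩
    fun _ _ _ hw => hw.1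

lemma cprod_inv_self_subset_thinResidue {s : SetRel X X} (hs : s ∈ S.rels) :
    S.cprod s.inv s ⊆ S.thinResidue :=
  fun _ hw => Set.mem_sInter.2 fun _ hU => hU.2 s hs hw

lemma cprod_subset_thinResidue {u v : SetRel X X} (hu : u ∈ S.thinResidue)
    (hv : v ∈ S.thinResidue) : S.cprod u v ⊆ S.thinResidue :=
  fun _ hw => Set.mem_sInter.2 fun U hU => hU.1.2.2 u (hu U hU) v (hv U hU) hw

lemma id_mem_thinResidue (hS : ∀ s ∈ S.rels, s.Nonempty) : SetRel.id ∈ S.thinResidue :=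
  cprod_inv_self_subset_thinResidue id_mem (id_mem_cprod_inv_self hS id_mem)

variable (S) in
lemma nOrd_eq_sum (U : Set (SetRel X X)) : S.nOrd U = ∑ u ∈ U.toFinset, S.val u :=
  finsum_mem_eq_toFinset_sum _ _

variable (S) in
lemma nOrd_le_nOrd {U V : Set (SetRel X X)} (h : U ⊆ V) : S.nOrd U ≤ S.nOrd V := by
  rw [nOrd_eq_sum, nOrd_eq_sum]
  exact sum_le_sum_of_subset (Set.toFinset_subset_toFinset.2 h)

lemma nOrd_lt_nOrd {U V : Set (SetRel X X)} (hV : ∀ v ∈ V, 0 < S.val v) (h : U ⊂ V) :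
    S.nOrd U < S.nOrd V := by
  obtain ⟨v, hvV, hvU⟩ := Set.exists_of_ssubset h
  rw [nOrd_eq_sum, nOrd_eq_sum]
  exact sum_lt_sum_of_subset (Set.toFinset_subset_toFinset.2 h.subset) (Set.mem_toFinset.2 hvV)
    (by simpa using hvU) (hV v hvV) fun _ _ _ => Nat.zero_le _

lemma nOrd_eq_card {U : Set (SetRel X X)} (hU : U ⊆ S.rels) (x : X) :
    S.nOrd U = #{y | (x, y) ∈ ⋃₀ U} := by
  have hrows : ({y | (x, y) ∈ ⋃₀ U} : Finset X) =
      U.toFinset.biUnion fun u => {y | (x, y) ∈ u} := by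
    ext y; simp
  have hdisj : (U.toFinset : Set (SetRel X X)).PairwiseDisjoint
      fun u => ({y | (x, y) ∈ u} : Finset X) :=
    fun u₁ hu₁ u₂ hu₂ hne => disjoint_left.2 fun y hy₁ hy₂ => hne <|
      S.eq_of_mem_of_mem (hU (by simpa using hu₁)) (hU (by simpa using hu₂))
        (mem_filter.1 hy₁).2 (mem_filter.1 hy₂).2
  rw [nOrd_eq_sum, hrows, card_biUnion hdisj]
  exact sum_congr rfl fun u hu => S.val_eq_card (hU (Set.mem_toFinset.1 hu)) x

lemma nOrd_rels [Nonempty X] : S.nOrd S.rels = Fintype.card X := by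
  obtain ⟨x⟩ := ‹Nonempty X›
  rw [nOrd_eq_card subset_rfl x, filter_true_of_mem fun y _ => ?_, card_univ]
  obtain ⟨s, hs, hxy⟩ := S.exists_mem_rels (x, y)
  exact ⟨s, hs, hxy⟩

lemma nOrd_dvd_card {W : Set (SetRel X X)} (hW : W ⊆ S.rels) (hid : SetRel.id ∈ W)
    (hinv : ∀ w ∈ W, w.inv ∈ W) (hmul : ∀ u ∈ W, ∀ v ∈ W, S.cprod u v ⊆ W) :
    S.nOrd W ∣ Fintype.card X := by
  -- `⋃₀ W` is an equivalence relation whose classes all have `S.nOrd W` elements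
  set cls : X → Finset X := fun x => {y | (x, y) ∈ ⋃₀ W}
  have hsymm {x y : X} : (x, y) ∈ ⋃₀ W → (y, x) ∈ ⋃₀ W :=
    fun ⟨w, hw, hxy⟩ => ⟨SetRel.inv w, hinv w hw, hxy⟩
  have htrans {x y z : X} : (x, y) ∈ ⋃₀ W → (y, z) ∈ ⋃₀ W → (x, z) ∈ ⋃₀ W :=
    fun ⟨u, hu, hxy⟩ ⟨v, hv, hyz⟩ => Set.sUnion_mono (hmul u hu v hv)
      (S.comp_subset_sUnion_cprod (hW hu) (hW hv) (prodMk_mem_comp hxy hyz))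
  have hfib (x₀ : X) : ({x | cls x = cls x₀} : Finset X) = cls x₀ := by
    ext x
    simp only [mem_filter, Finset.mem_univ, true_and]
    refine ⟨fun h => ?_, fun h => ?_⟩
    · have hx : x ∈ cls x := by simpa [cls] using ⟨_, hid, rfl⟩
      rwa [h] at hx
    · replace h : (x₀, x) ∈ ⋃₀ W := by simpa [cls] using h
      ext y
      simp only [cls, mem_filter, Finset.mem_univ, true_and]
      exact ⟨htrans h, htrans (hsymm h)⟩
  have hsum := card_eq_sum_card_image cls univ
  rw [sum_congr rfl (g := fun _ => S.nOrd W) fun C hC => by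
    obtain ⟨x₀, -, rfl⟩ := mem_image.1 hC
    rw [hfib, nOrd_eq_card hW x₀], sum_const, smul_eq_mul, card_univ] at hsum
  exact hsum ▸ dvd_mul_left _ _

lemma nOrd_thinRadical : S.nOrd S.thinRadical = #S.thinRadical.toFinset := by
  rw [nOrd_eq_sum, card_eq_sum_ones]
  exact sum_congr rfl fun e he => (Set.mem_toFinset.1 he).2

lemma thinRadical_subset_thinResidue_and_ncard_diff_lt {p : ℕ} (hp : 0 < p)
    (hS : ∀ s ∈ S.rels, s.Nonempty) (hrad : S.nOrd S.thinRadical = p ^ 2)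
    (hres : S.nOrd S.thinResidue = p ^ 3)
    (hval : ∀ t ∈ S.thinResidue, t ∉ S.thinRadical → S.val t = p ^ 2) :
    S.thinRadical ⊆ S.thinResidue ∧ (S.thinResidue \ S.thinRadical).ncard < p := by
  have := nonempty_of_forall_nonempty hS
  set A : Finset (SetRel X X) := {u ∈ S.thinResidue.toFinset | u ∈ S.thinRadical}
  set D : Finset (SetRel X X) := {u ∈ S.thinResidue.toFinset | u ∉ S.thinRadical}
  have hsplit : #A + p ^ 2 * #D = p ^ 3 := by
    rw [← hres, nOrd_eq_sum, ← sum_filter_add_sum_filter_not _ (· ∈ S.thinRadical),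
      card_eq_sum_ones, card_eq_sum_ones, mul_sum]
    congr 1
    · exact sum_congr rfl fun u hu => (mem_filter.1 hu).2.2.symm
    · refine sum_congr rfl fun u hu => ?_
      obtain ⟨hu, huE⟩ := mem_filter.1 hu
      rw [hval u (Set.mem_toFinset.1 hu) huE, mul_one]
  have hAE : A ⊆ S.thinRadical.toFinset := fun u hu => Set.mem_toFinset.2 (mem_filter.1 hu).2
  have hE : #S.thinRadical.toFinset = p ^ 2 := (nOrd_thinRadical (S := S)).symm.trans hrad
  have hA : #A = p ^ 2 := by
    have hdvd : p ^ 2 ∣ #A + p ^ 2 * #D := hsplit ▸ pow_dvd_pow p (by norm_num)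
    replace hdvd := (Nat.dvd_add_left (dvd_mul_right _ _)).1 hdvd
    have hpos : 0 < #A := card_pos.2 ⟨_, mem_filter.2
      ⟨Set.mem_toFinset.2 (id_mem_thinResidue hS), id_mem_thinRadical⟩⟩
    exact le_antisymm (hE ▸ card_le_card hAE) (Nat.le_of_dvd hpos hdvd)
  refine ⟨fun e he => ?_, ?_⟩
  · have he' : e ∈ A := by
      rw [eq_of_subset_of_card_le hAE (by rw [hA, hE])]
      exact Set.mem_toFinset.2 he
    exact Set.mem_toFinset.1 (mem_filter.1 he').1
  · have hD : (S.thinResidue \ S.thinRadical).ncard = #D := by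
      rw [Set.ncard_eq_toFinset_card']
      congr 1
      ext
      simp [D]
    have : p ^ 2 * (1 + #D) = p ^ 2 * p := by linarith
    have := Nat.eq_of_mul_eq_mul_left (by positivity) this
    omega

lemma comp_eq_self_of_mem_thinResidue_diff {p k : ℕ} (hp : p.Prime)
    (hS : ∀ s ∈ S.rels, s.Nonempty) (hET : S.thinRadical ⊆ S.thinResidue)
    (hD : (S.thinResidue \ S.thinRadical).ncard < p) (hE : #S.thinRadical.toFinset = p ^ k)
    {t e : SetRel X X} (ht : t ∈ S.thinResidue \ S.thinRadical) (he : e ∈ S.thinRadical) :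
    t ○ e = t := by
  have := nonempty_of_forall_nonempty hS
  have htr := thinResidue_subset_rels ht.1
  set orbit := S.thinRadical.toFinset.image (t ○ ·)
  have hsub : (orbit : Set (SetRel X X)) ⊆ S.thinResidue \ S.thinRadical := by
    intro w hw
    obtain ⟨f, hf, rfl⟩ := mem_image.1 hw
    rw [Set.mem_toFinset] at hf
    refine ⟨cprod_subset_thinResidue ht.1 (hET hf) (comp_mem_cprod_of_mem_thinRadical hS htr hf),
      fun h => ht.2 ⟨htr, ?_⟩⟩
    rw [← val_comp_of_mem_thinRadical hS htr hf]
    exact h.2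
  have hlt : #orbit < p := (Set.ncard_coe_finset orbit ▸ Set.ncard_le_ncard hsub).trans_lt hD
  -- an orbit of the `p`-group of thin relations with fewer than `p` points is a fixed point
  obtain ⟨i, -, hi⟩ := (Nat.dvd_prime_pow hp).1 (hE ▸ card_image_comp_dvd hS t)
  have hi0 : i = 0 := by
    have : p ^ i < p ^ 1 := by rwa [pow_one, ← hi]
    have := (pow_lt_pow_iff_right₀ hp.one_lt).1 this
    omega
  obtain ⟨w, hw⟩ := card_eq_one.1 (by rw [hi, hi0, pow_zero] : #orbit = 1)
  have h1 : t ○ e ∈ orbit := mem_image_of_mem _ (Set.mem_toFinset.2 he)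
  have h2 : t ∈ orbit := mem_image.2 ⟨_, Set.mem_toFinset.2 id_mem_thinRadical, comp_id t⟩
  rw [hw, Finset.mem_singleton] at h1 h2
  rw [h1, h2]

lemma cprod_inv_self_subset_thinRadical_of_forall_comp_eq (hS : ∀ s ∈ S.rels, s.Nonempty)
    {t : SetRel X X} (ht : t ∈ S.rels) (hfix : ∀ e ∈ S.thinRadical, t ○ e = t)
    (hle : S.val t ≤ #S.thinRadical.toFinset) : S.cprod t.inv t ⊆ S.thinRadical := by
  have := nonempty_of_forall_nonempty hS
  intro r hr
  by_contra hrE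
  have ha : ∀ e ∈ S.thinRadical, S.a t.inv t e = S.val t := by
    intro e he
    obtain ⟨⟨x, y⟩, hxy⟩ := hS e he.1
    rw [S.a_eq_card (inv_mem ht) ht he.1 hxy, ← val_inv ht, S.val_eq_card (inv_mem ht) x]
    congr 1
    ext z
    simp only [mem_filter, Finset.mem_univ, true_and, and_iff_left_iff_imp]
    exact fun hzx => hfix e he ▸ prodMk_mem_comp hzx hxy
  -- the thin constituents of `t⁻¹ t` already exhaust the count `n_t ^ 2`
  have h := S.sum_a_mul_val_le (inv_mem ht) ht (insert r S.thinRadical.toFinset) (by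
    simp only [Finset.mem_insert, Set.mem_toFinset]
    rintro w (rfl | hw)
    exacts [hr.1, hw.1])
  rw [sum_insert (by simpa using hrE), sum_congr rfl fun e he => by
      rw [ha e (Set.mem_toFinset.1 he), (Set.mem_toFinset.1 he).2, mul_one],
    sum_const, smul_eq_mul, val_inv ht] at h
  have hr0 : 0 < S.a t.inv t r * S.val r :=
    Nat.mul_pos (Nat.pos_of_ne_zero hr.2) ((val_pos_iff hr.1).2 (hS r hr.1))
  nlinarith [Nat.mul_le_mul_right (S.val t) hle]

lemma cprod_inv_self_subset_thinRadical_of_mem_thinResidue {p : ℕ} (hp : p.Prime)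
    (hS : ∀ s ∈ S.rels, s.Nonempty) (hrad : S.nOrd S.thinRadical = p ^ 2)
    (hres : S.nOrd S.thinResidue = p ^ 3)
    (hval : ∀ t ∈ S.thinResidue, t ∉ S.thinRadical → S.val t = p ^ 2) {t : SetRel X X}
    (ht : t ∈ S.thinResidue) : S.cprod t.inv t ⊆ S.thinRadical := by
  have := nonempty_of_forall_nonempty hS
  by_cases htE : t ∈ S.thinRadical
  · exact cprod_subset_thinRadical hS (inv_mem_thinRadical htE) htE
  obtain ⟨hET, hD⟩ := thinRadical_subset_thinResidue_and_ncard_diff_lt hp.pos hS hrad hres hval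
  have hE : #S.thinRadical.toFinset = p ^ 2 := (nOrd_thinRadical (S := S)).symm.trans hrad
  exact cprod_inv_self_subset_thinRadical_of_forall_comp_eq hS (thinResidue_subset_rels ht)
    (fun e he => comp_eq_self_of_mem_thinResidue_diff hp hS hET hD hE ⟨ht, htE⟩ he)
    (by rw [hval t ht htE, hE])

lemma cprod_inv_self_subset_thinRadical_of_val_le {p : ℕ} (hS : ∀ s ∈ S.rels, s.Nonempty)
    (hval : ∀ t ∈ S.thinResidue, t ∉ S.thinRadical → S.val t = p ^ 2) {s : SetRel X X}
    (hs : s ∈ S.rels) (hsp : S.val s ≤ p) : S.cprod s.inv s ⊆ S.thinRadical := by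
  have := nonempty_of_forall_nonempty hS
  intro r hr
  by_contra hrE
  have h := val_add_one_le_sq hS hs hr fun h => hrE (h ▸ id_mem_thinRadical)
  rw [hval r (cprod_inv_self_subset_thinResidue hs hr) hrE] at h
  nlinarith [Nat.pow_le_pow_left hsp 2]

lemma forall_cprod_inv_self_subset_thinRadical {p : ℕ} (hp : p.Prime)
    (hS : ∀ s ∈ S.rels, s.Nonempty) (hcomm : S.IsCommutative) (hcard : Fintype.card X = p ^ 4)
    {U : Set (SetRel X X)}
    (hU : U ⊆ {u | u ∈ S.rels ∧ S.cprod (SetRel.inv u) u ⊆ S.thinRadical})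
    (hUord : p ^ 3 < S.nOrd U) {w : SetRel X X} (hw : w ∈ S.rels) :
    S.cprod w.inv w ⊆ S.thinRadical := by
  have := nonempty_of_forall_nonempty hS
  set W : Set (SetRel X X) := {u | u ∈ S.rels ∧ S.cprod (SetRel.inv u) u ⊆ S.thinRadical}
  have hWrels : W ⊆ S.rels := fun _ h => h.1
  have hdvd : S.nOrd W ∣ p ^ 4 := hcard ▸ nOrd_dvd_card hWrels
    ⟨id_mem, cprod_subset_thinRadical hS (inv_mem_thinRadical id_mem_thinRadical)
      id_mem_thinRadical⟩
    (fun u hu => ⟨inv_mem hu.1, cprod_comm hcomm hu.1 (inv_mem hu.1) ▸ hu.2⟩)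
    (fun u hu v hv w hw => ⟨hw.1,
      cprod_inv_self_subset_thinRadical_of_mem_cprod hS hcomm hu.1 hv.1 hu.2 hv.2 hw⟩)
  have hW : S.nOrd W = S.nOrd S.rels := by
    obtain ⟨i, hi4, hi⟩ := (Nat.dvd_prime_pow hp).1 hdvd
    have : 3 < i :=
      (pow_lt_pow_iff_right₀ hp.one_lt).1 (hi ▸ hUord.trans_le (S.nOrd_le_nOrd hU))
    rw [hi, nOrd_rels, hcard, show i = 4 by omega]
  by_contra hwW
  exact (nOrd_lt_nOrd (fun v hv => (val_pos_iff hv).2 (hS v hv))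
    ((Set.ssubset_iff_of_subset hWrels).2 ⟨w, hw, fun h => hwW h.2⟩)).ne hW

end AssocScheme

open AssocScheme

/-- for a commutative p-scheme of order `p^4` with `n_{O_θ(S)} = p^2`,
`n_{O^θ(S)} = p^3` and `n_t = p^2` for all `t ∈ O^θ(S) ∖ O_θ(S)`, every relation
outside the thin residue has valency at least `p^2`. -/
theorem stmt13 {X : Type*} [Fintype X] (S : AssocScheme X) (p : ℕ)
    (hp : S.IsPScheme p) (hcomm : S.IsCommutative)
    (hcard : Fintype.card X = p ^ 4)
    (hrad : S.nOrd S.thinRadical = p ^ 2)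
    (hres : S.nOrd S.thinResidue = p ^ 3)
    (hval : ∀ t ∈ S.thinResidue, t ∉ S.thinRadical → S.val t = p ^ 2) :
    ∀ s ∈ S.rels, s ∉ S.thinResidue → p ^ 2 ≤ S.val s := by
  intro s hs hsT
  by_contra! hlt
  have : Nonempty X := Fintype.card_pos_iff.1 (hcard ▸ pow_pos hp.1.pos 4)
  have hS : ∀ s ∈ S.rels, s.Nonempty := fun s hs => (val_pos_iff hs).1 (hp.val_pos hs)
  have hsp : S.val s ≤ p := by
    obtain ⟨i, hi⟩ := hp.2.2 s hs
    rw [hi] at hlt ⊢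
    have : i < 2 := (pow_lt_pow_iff_right₀ hp.1.one_lt).1 hlt
    exact (pow_le_pow_right₀ hp.1.one_lt.le (by omega : i ≤ 1)).trans_eq (pow_one p)
  have hTE : S.thinResidue ⊆ S.thinRadical := by
    refine thinResidue_subset_of_isClosedSubset (isClosedSubset_thinRadical hS) fun w hw =>
      forall_cprod_inv_self_subset_thinRadical hp.1 hS hcomm hcard (U := insert s S.thinResidue)
        ?_ ?_ hw
    · rintro u (rfl | hu)
      exacts [⟨hs, cprod_inv_self_subset_thinRadical_of_val_le hS hval hs hsp⟩,
        ⟨thinResidue_subset_rels hu,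
          cprod_inv_self_subset_thinRadical_of_mem_thinResidue hp.1 hS hrad hres hval hu⟩]
    · exact hres ▸ nOrd_lt_nOrd
        (fun u hu => hp.val_pos (Set.insert_subset hs thinResidue_subset_rels hu))
        (Set.ssubset_insert hsT)
  have := S.nOrd_le_nOrd hTE
  rw [hres, hrad] at this
  exact this.not_gt (pow_lt_pow_right₀ hp.1.one_lt (by norm_num))
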